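/- arXiv:1401.0201 — 2 statements merged into one kernel-verified Lean document; each statement's English description precedes it below -/
import Mathlib

section
/- For all γ ∈ (0,1) and integers K ≥ 1, (1/(K+1))·(1 - (1-γ)^{K+1}) ≥ 1/(1/γ + K). -/
lemma aux_bernoulli (γ : ℝ) (hγ0 : 0 < γ) (hγ1 : γ < 1) :
    ∀ K : ℕ, (1 + γ * K) * (1 - γ) ^ K ≤ 1 := by
  intro K
  induction K with
  | zero => simp
  | succ n ih =>
    have h1γ : (0:ℝ) ≤ 1 - γ := by linarith
    have hp : (0:ℝ) ≤ (1 - γ) ^ n := pow_nonneg h1γ n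
    push_cast
    have hs : (1 - γ) ^ (n + 1) = (1 - γ) ^ n * (1 - γ) := pow_succ _ _
    have hE : (1 + γ * ((n:ℝ) + 1)) * ((1 - γ) ^ n * (1 - γ))
        = (1 + γ * n) * (1 - γ) ^ n - γ ^ 2 * ((n:ℝ) + 1) * (1 - γ) ^ n := by ring
    rw [hs, hE]
    nlinarith [mul_nonneg (mul_nonneg (sq_nonneg γ) (by positivity : (0:ℝ) ≤ (n:ℝ)+1)) hp]

/-- For all `γ ∈ (0,1)` and integers `K ≥ 1`,
`(1/(K+1))·(1 - (1-γ)^(K+1)) ≥ 1/(1/γ + K)`. -/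
theorem complexity_lower_bound (γ : ℝ) (hγ0 : 0 < γ) (hγ1 : γ < 1)
    (K : ℕ) (hK : 1 ≤ K) :
    (1 / ((K : ℝ) + 1)) * (1 - (1 - γ) ^ (K + 1)) ≥ 1 / (1 / γ + K) := by
  have hb := aux_bernoulli γ hγ0 hγ1 K
  have h1γ : (0:ℝ) ≤ 1 - γ := by linarith
  have hp : (0:ℝ) ≤ (1 - γ) ^ K := pow_nonneg h1γ K
  have hd1 : (0:ℝ) < (K:ℝ) + 1 := by positivity
  have hd2 : (0:ℝ) < 1 + γ * K := by positivity
  have hd3 : (0:ℝ) < 1 / γ + K := by positivity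
  have key : 1 / (1 / γ + (K:ℝ)) = γ / (1 + γ * K) := by
    rw [div_eq_div_iff hd3.ne' hd2.ne']
    field_simp
  rw [ge_iff_le, key, div_le_iff₀ hd2, one_div, inv_mul_eq_div, div_mul_eq_mul_div,
    le_div_iff₀ hd1]
  have hexp : (1 - γ) ^ (K + 1) = (1 - γ) ^ K * (1 - γ) := by ring
  nlinarith [hb, hp]
end

section
/- Let K ≥ 1 be an integer and γ ∈ (0,1]. Then (1-(1-γ)^{K+1})/(K+1) ≥ γ/(1+γK). -/
/-- For integer `K ≥ 1` and `γ ∈ (0,1]`,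
`(1-(1-γ)^(K+1))/(K+1) ≥ γ/(1+γK)`. -/
theorem exact_dominates_jensen (K : ℕ) (hK : 1 ≤ K)
    (γ : ℝ) (hγ0 : 0 < γ) (hγ1 : γ ≤ 1) :
    (1 - (1 - γ) ^ (K + 1)) / ((K : ℝ) + 1) ≥ γ / (1 + γ * K) := by
  have hx0 : (0:ℝ) ≤ 1 - γ := by linarith
  have hK0 : (0:ℝ) < (K : ℝ) + 1 := by positivity
  have hd : (0:ℝ) < 1 + γ * K := by positivity
  have hbern : 1 + (K : ℝ) * γ ≤ (1 + γ) ^ K :=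
    one_add_mul_le_pow (by linarith) K
  have hprod : (1 - γ) ^ K * (1 + γ) ^ K ≤ 1 := by
    rw [← mul_pow]
    calc ((1 - γ) * (1 + γ)) ^ K ≤ 1 ^ K :=
          pow_le_pow_left₀ (by nlinarith) (by nlinarith) K
      _ = 1 := one_pow K
  have key : (1 + γ * K) * (1 - γ) ^ K ≤ 1 := by
    have h1 : (1 + γ * K) * (1 - γ) ^ K ≤ (1 + γ) ^ K * (1 - γ) ^ K := by
      apply mul_le_mul_of_nonneg_right _ (pow_nonneg hx0 K)
      linarith
    nlinarith
  have key2 : (1 + γ * K) * (1 - γ) ^ (K + 1) ≤ 1 - γ := by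
    have h2 : (1 + γ * K) * (1 - γ) ^ (K + 1)
        = ((1 + γ * K) * (1 - γ) ^ K) * (1 - γ) := by ring
    rw [h2]
    nlinarith [pow_nonneg hx0 K]
  rw [ge_iff_le, div_le_div_iff₀ hd hK0]
  nlinarith
end
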